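/- Let S and A be finite nonempty sets, let γ ∈ [0,1), let T : S × A → PMF(S) be a transition kernel, let ρ₀ be a probability distribution on S, let r : S × A → ℝ be a reward function with |r(s,a)| ≤ R_MAX for all (s,a), and let π and π_E be stationary policies. Let J(π) = E[Σ_{t=0}^{∞} γ^t r(s_t, a_t)] be the expected discounted return under π, and let ρ_π, ρ_{π_E} be the discounted state–action occupancy measures of π and π_E. Then |J(π_E) − J(π)| ≤ (2 R_MAX / (1−γ)) · D_TV(ρ_π, ρ_{π_E}). -/

import Mathlib

/-- `stateDist T π ρ₀ t s` is the probability `P(s_t = s | π)` that the Markov chain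
induced by the policy `π` in the MDP with transition kernel `T` and initial state
distribution `ρ₀` is in state `s` at time `t`. -/
noncomputable def stateDist {S A : Type*} [Fintype S] [Fintype A]
    (T : S → A → PMF S) (π : S → PMF A) (ρ₀ : PMF S) : ℕ → S → ℝ
  | 0, s => (ρ₀ s).toReal
  | t + 1, s' =>
      ∑ s : S, ∑ a : A, stateDist T π ρ₀ t s * ((π s) a).toReal * ((T s a) s').toReal

/-- The discounted state–action occupancy measure
`ρ_π(s,a) = (1−γ) Σ_t γ^t P(s_t = s, a_t = a | π)
          = (1−γ) Σ_t γ^t P(s_t = s | π) π(a|s)`. -/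
noncomputable def saOcc {S A : Type*} [Fintype S] [Fintype A]
    (T : S → A → PMF S) (π : S → PMF A) (ρ₀ : PMF S) (γ : ℝ) (sa : S × A) : ℝ :=
  (1 - γ) * ∑' t : ℕ, γ ^ t * stateDist T π ρ₀ t sa.1 * ((π sa.1) sa.2).toReal

/-- The expected discounted return `J(π) = E[Σ_t γ^t r(s_t, a_t)]`. -/
noncomputable def expReturn {S A : Type*} [Fintype S] [Fintype A]
    (T : S → A → PMF S) (π : S → PMF A) (ρ₀ : PMF S) (γ : ℝ) (r : S → A → ℝ) : ℝ :=
  ∑' t : ℕ, γ ^ t * ∑ s : S, ∑ a : A, stateDist T π ρ₀ t s * ((π s) a).toReal * r s a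

/-- The total variation distance between two distributions on a finite set. -/
noncomputable def tvDist {A : Type*} [Fintype A] (p q : A → ℝ) : ℝ :=
  (1 / 2) * ∑ a : A, |p a - q a|

/-!
Since `J(π) = (1−γ)⁻¹ Σ ρ_π(s,a) r(s,a)`, the return gap is `(1−γ)⁻¹ Σ (ρ_{π_E} − ρ_π) r`,
and pairing a difference of two vectors with a function bounded by `R_MAX` gives at most
`R_MAX Σ |ρ_π − ρ_{π_E}| = 2 R_MAX D_TV(ρ_π, ρ_{π_E})`. The interchange of the series over time
with the finite sum over `S × A` is justified by domination by `γ^t`.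
-/

open Finset

theorem PMF.sum_toReal_eq_one {α : Type*} [Fintype α] (p : PMF α) :
    ∑ a, (p a).toReal = 1 := by
  rw [← ENNReal.toReal_sum fun a _ => p.apply_ne_top a, ← tsum_fintype (L := .unconditional α),
    p.tsum_coe, ENNReal.toReal_one]

theorem abs_sum_mul_sub_sum_mul_le_tvDist {α : Type*} [Fintype α] (p q f : α → ℝ) {M : ℝ}
    (hf : ∀ x, |f x| ≤ M) :
    |∑ x, p x * f x - ∑ x, q x * f x| ≤ 2 * M * tvDist p q := by
  rw [tvDist, ← mul_assoc, show 2 * M * (1 / 2) = M by ring, mul_sum, ← sum_sub_distrib]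
  calc |∑ x, (p x * f x - q x * f x)|
      ≤ ∑ x, |p x * f x - q x * f x| := abs_sum_le_sum_abs _ univ
    _ ≤ ∑ x, M * |p x - q x| := sum_le_sum fun x _ => by
        rw [← sub_mul, abs_mul, mul_comm]
        exact mul_le_mul_of_nonneg_right (hf x) (abs_nonneg _)

theorem summable_pow_mul_of_abs_le {γ : ℝ} (hγ0 : 0 ≤ γ) (hγ1 : γ < 1) {f : ℕ → ℝ} {C : ℝ}
    (hf : ∀ t, |f t| ≤ C) : Summable fun t => γ ^ t * f t := by
  refine ((summable_geometric_of_lt_one hγ0 hγ1).mul_right C).of_norm_bounded fun t => ?_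
  rw [Real.norm_eq_abs, abs_mul, abs_of_nonneg (pow_nonneg hγ0 t)]
  exact mul_le_mul_of_nonneg_left (hf t) (pow_nonneg hγ0 t)

section stateDist

variable {S A : Type*} [Fintype S] [Fintype A] (T : S → A → PMF S) (π : S → PMF A) (ρ₀ : PMF S)

theorem stateDist_nonneg (t : ℕ) (s : S) : 0 ≤ stateDist T π ρ₀ t s := by
  induction t generalizing s with
  | zero => exact ENNReal.toReal_nonneg
  | succ t ih =>
    exact sum_nonneg fun s _ => sum_nonneg fun a _ =>
      mul_nonneg (mul_nonneg (ih s) ENNReal.toReal_nonneg) ENNReal.toReal_nonneg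

theorem sum_stateDist (t : ℕ) : ∑ s, stateDist T π ρ₀ t s = 1 := by
  induction t with
  | zero => exact ρ₀.sum_toReal_eq_one
  | succ t ih =>
    calc ∑ s', stateDist T π ρ₀ (t + 1) s'
        = ∑ s, ∑ a, stateDist T π ρ₀ t s * (π s a).toReal * ∑ s', (T s a s').toReal := by
          simp only [stateDist, mul_sum]
          rw [sum_comm]
          exact sum_congr rfl fun s _ => sum_comm
      _ = 1 := by simp only [PMF.sum_toReal_eq_one, mul_one, ← mul_sum, ih]

theorem stateDist_le_one (t : ℕ) (s : S) : stateDist T π ρ₀ t s ≤ 1 :=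
  sum_stateDist T π ρ₀ t ▸
    single_le_sum (fun s _ => stateDist_nonneg T π ρ₀ t s) (mem_univ s)

theorem summable_pow_mul_stateDist_mul {γ : ℝ} (hγ0 : 0 ≤ γ) (hγ1 : γ < 1) (s : S) (c : ℝ) :
    Summable fun t => γ ^ t * stateDist T π ρ₀ t s * c := by
  simp_rw [mul_assoc]
  refine summable_pow_mul_of_abs_le hγ0 hγ1 (C := |c|) fun t => ?_
  rw [abs_mul, abs_of_nonneg (stateDist_nonneg T π ρ₀ t s)]
  exact mul_le_of_le_one_left (abs_nonneg c) (stateDist_le_one T π ρ₀ t s)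

theorem expReturn_eq_sum_saOcc_mul_div {γ : ℝ} (hγ0 : 0 ≤ γ) (hγ1 : γ < 1) (r : S → A → ℝ) :
    expReturn T π ρ₀ γ r = (∑ sa : S × A, saOcc T π ρ₀ γ sa * r sa.1 sa.2) / (1 - γ) := by
  rw [eq_div_iff (sub_pos.2 hγ1).ne', mul_comm]
  simp only [saOcc, expReturn, mul_assoc, ← mul_sum, ← tsum_mul_right]
  congr 1
  rw [← Summable.tsum_finsetSum fun sa _ => ?_]
  · exact tsum_congr fun t => by simp only [Fintype.sum_prod_type, mul_sum]
  · simpa only [mul_assoc] using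
      summable_pow_mul_stateDist_mul T π ρ₀ hγ0 hγ1 sa.1 ((π sa.1 sa.2).toReal * r sa.1 sa.2)

end stateDist

theorem return_gap_le_tvDist_saOcc_general {S A : Type*} [Fintype S] [Fintype A]
    (γ : ℝ) (hγ0 : 0 ≤ γ) (hγ1 : γ < 1)
    (T : S → A → PMF S) (ρ₀ : PMF S)
    (r : S → A → ℝ) (Rmax : ℝ) (hr : ∀ (s : S) (a : A), |r s a| ≤ Rmax)
    (π πE : S → PMF A) :
    |expReturn T πE ρ₀ γ r - expReturn T π ρ₀ γ r| ≤
      (2 * Rmax / (1 - γ)) * tvDist (saOcc T π ρ₀ γ) (saOcc T πE ρ₀ γ) := by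
  have hγ : 0 < 1 - γ := sub_pos.2 hγ1
  rw [expReturn_eq_sum_saOcc_mul_div T πE ρ₀ hγ0 hγ1,
    expReturn_eq_sum_saOcc_mul_div T π ρ₀ hγ0 hγ1, ← sub_div, abs_div, abs_of_pos hγ,
    abs_sub_comm, div_mul_eq_mul_div]
  exact div_le_div_of_nonneg_right
    (abs_sum_mul_sub_sum_mul_le_tvDist _ _ (fun sa : S × A => r sa.1 sa.2)
      fun sa => hr sa.1 sa.2) hγ.le

/-- The gap between the expected discounted returns of two policies is bounded by
`2 R_MAX/(1−γ)` times the total variation distance between their discounted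
state–action occupancy measures. -/
theorem return_gap_le_tvDist_saOcc {S A : Type*} [Fintype S] [Fintype A]
    [Nonempty S] [Nonempty A]
    (γ : ℝ) (hγ0 : 0 ≤ γ) (hγ1 : γ < 1)
    (T : S → A → PMF S) (ρ₀ : PMF S)
    (r : S → A → ℝ) (Rmax : ℝ) (hr : ∀ (s : S) (a : A), |r s a| ≤ Rmax)
    (π πE : S → PMF A) :
    |expReturn T πE ρ₀ γ r - expReturn T π ρ₀ γ r| ≤
      (2 * Rmax / (1 - γ)) * tvDist (saOcc T π ρ₀ γ) (saOcc T πE ρ₀ γ) :=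
  return_gap_le_tvDist_saOcc_general γ hγ0 hγ1 T ρ₀ r Rmax hr π πE
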